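/- Rigidity for normalized weight: let (G,m,w,B) be a connected finite weighted graph with boundary with normalized weight (Deg(x) = 1 for all x ∈ V), satisfying CD(K,n) with K > 0, n > 1, and σ₂ = nK/(n−1). Then n = ∞, K = 1, the interior induces no edges (E(Ω,Ω) = ∅), and Deg_b(x) = 1 for every interior vertex. -/

import Mathlib

/-!
Integrating the Bakry–Émery inequality against `m` and using Bochner's and Green's formulas
turns `CD(K,n)` into nonnegativity of the quadratic form `f ↦ ⟨Δf, (1 - 1/n) Δf + K f⟩`, and a
Steklov eigenfunction `u` with eigenvalue `nK/(n-1)` is a zero of it. Polarizing, the function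
`(1 - 1/n) Δu + K u` has zero Dirichlet energy, so it is constant, and it vanishes on `B`; hence
`u` vanishes in the interior, `Δu = -u`, the eigenvalue is `1` and `K = 1 - 1/n`. The
curvature-dimension inequality is then an equality at every vertex for `u`; with `v = u²` and the
Markov operator `P = Δ + 1` it reads `P²v + (2/n) Pv = (1 + 2/n) v`. At an interior neighbour of
the boundary this forces `1/n = 0`, and `P²v = v` with `v` supported on `B` leaves no room for
interior edges in a connected graph.
-/

open Finset

variable {V : Type*} [Fintype V] [DecidableEq V]

/-- The weighted graph Laplacian: `Δu(x) = (1/m x) ∑_y (u y - u x) w x y`. -/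
noncomputable def glap (m : V → ℝ) (w : V → V → ℝ) (u : V → ℝ) (x : V) : ℝ :=
  (1 / m x) * ∑ y, (u y - u x) * w x y

/-- The carré du champ operator `Γ(u,v) = (1/2)(Δ(uv) - vΔu - uΔv)`. -/
noncomputable def gGam (m : V → ℝ) (w : V → V → ℝ) (u v : V → ℝ) (x : V) : ℝ :=
  (1 / 2) * (glap m w (fun z => u z * v z) x - v x * glap m w u x - u x * glap m w v x)

/-- The iterated carré du champ `Γ₂(u,v) = (1/2)(ΔΓ(u,v) - Γ(Δu,v) - Γ(u,Δv))`. -/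
noncomputable def gGam2 (m : V → ℝ) (w : V → V → ℝ) (u v : V → ℝ) (x : V) : ℝ :=
  (1 / 2) * (glap m w (gGam m w u v) x - gGam m w (glap m w u) v x - gGam m w u (glap m w v) x)

/-- Vertex inner product `⟨u,v⟩ = ∑_x u x v x m x`. -/
noncomputable def vip (m : V → ℝ) (u v : V → ℝ) : ℝ := ∑ x, u x * v x * m x

/-- Edge (1-form) inner product of differentials:
`⟨du,dv⟩ = ∑_{{x,y}∈E} (u y - u x)(v y - v x) w x y = (1/2)∑_{x,y}`. -/
noncomputable def eip (w : V → V → ℝ) (u v : V → ℝ) : ℝ :=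
  (1 / 2) * ∑ x, ∑ y, (u y - u x) * (v y - v x) * w x y

/-- `(m,w)` is a weighted graph structure: positive vertex measure, symmetric
nonnegative edge weights, no loops. -/
def WeightedGraph (m : V → ℝ) (w : V → V → ℝ) : Prop :=
  (∀ x, 0 < m x) ∧ (∀ x y, w x y = w y x) ∧ (∀ x y, 0 ≤ w x y) ∧ (∀ x, w x x = 0)

/-- The underlying simple graph: `x ∼ y` iff `w x y > 0`. -/
def wgraph (w : V → V → ℝ) : SimpleGraph V := SimpleGraph.fromRel (fun x y => 0 < w x y)

/-- The Bakry-Émery curvature-dimension condition `CD(K,n)`. -/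
def CD (m : V → ℝ) (w : V → V → ℝ) (K n : ℝ) : Prop :=
  ∀ (f : V → ℝ) (x : V), gGam2 m w f f x ≥ (1 / n) * (glap m w f x) ^ 2 + K * gGam m w f f x

/-- `B` is a vertex boundary: nonempty, independent, and every boundary vertex is
adjacent to some interior vertex. -/
def GraphBoundary (w : V → V → ℝ) (B : Finset V) : Prop :=
  B.Nonempty ∧ (∀ x ∈ B, ∀ y ∈ B, w x y = 0) ∧ (∀ x ∈ B, ∃ y, y ∉ B ∧ 0 < w x y)

/-- `σ` is a Steklov eigenvalue: there is `u`, harmonic on the interior, with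
boundary restriction nonzero, and `∂u/∂n = σ u` on `B`. -/
def SteklovEig (m : V → ℝ) (w : V → V → ℝ) (B : Finset V) (σ : ℝ) : Prop :=
  ∃ u : V → ℝ, (∃ x ∈ B, u x ≠ 0) ∧ (∀ x, x ∉ B → glap m w u x = 0) ∧
    (∀ x ∈ B, - glap m w u x = σ * u x)

/-- `μ` is an eigenvalue of `-Δ`. -/
def LapEig (m : V → ℝ) (w : V → V → ℝ) (μ : ℝ) : Prop :=
  ∃ u : V → ℝ, u ≠ 0 ∧ ∀ x, - glap m w u x = μ * u x

/-- The edge weight of the induced graph on the interior `Ω = Bᶜ`. -/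
def wRes (B : Finset V) (w : V → V → ℝ) : V → V → ℝ :=
  fun x y => if x ∈ B ∨ y ∈ B then 0 else w x y

open ENNReal in
/-- The coefficient `1/n` for the extended dimension parameter `n ∈ (1,∞]`,
equal to `0` when `n = ∞`. -/
noncomputable def cdC (n : ℝ≥0∞) : ℝ := (n⁻¹).toReal

open ENNReal in
/-- The Lichnerowicz constant `nK/(n-1)`, equal to `K` when `n = ∞`. -/
noncomputable def lich (n : ℝ≥0∞) (K : ℝ) : ℝ :=
  if n = ⊤ then K else n.toReal * K / (n.toReal - 1)

open ENNReal in
/-- The Bakry-Émery condition `CD(K,n)` for extended dimension `n ∈ (1,∞]`;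
for `n = ∞` the `(Δf)²/n` term is omitted. -/
def CDE (m : V → ℝ) (w : V → V → ℝ) (K : ℝ) (n : ℝ≥0∞) : Prop :=
  ∀ (f : V → ℝ) (x : V),
    gGam2 m w f f x ≥ cdC n * (glap m w f x) ^ 2 + K * gGam m w f f x

section Connectivity

omit [Fintype V] [DecidableEq V]

theorem SimpleGraph.Connected.forall_of_adj_imp {G : SimpleGraph V} (hG : G.Connected)
    {P : V → Prop} (hP : ∀ a b, G.Adj a b → P a → P b) {a : V} (ha : P a) (b : V) : P b := by
  obtain ⟨p⟩ := hG.preconnected a b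
  induction p with
  | nil => exact ha
  | cons hadj _ ih => exact ih (hP _ _ hadj ha)

theorem pos_of_wgraph_adj {w : V → V → ℝ} (hsymm : ∀ x y, w x y = w y x) {a b : V}
    (h : (wgraph w).Adj a b) : 0 < w a b := by
  rw [wgraph, SimpleGraph.fromRel_adj, hsymm b a, or_self] at h
  exact h.2

end Connectivity

section Calculus

omit [DecidableEq V]

variable (m : V → ℝ) (w : V → V → ℝ)

theorem glap_add_smul (f g : V → ℝ) (t : ℝ) (x : V) :
    glap m w (fun z => f z + t * g z) x = glap m w f x + t * glap m w g x := by
  simp only [glap, mul_left_comm t, ← mul_add, Finset.mul_sum, ← Finset.sum_add_distrib]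
  exact Finset.sum_congr rfl fun y _ => by ring

theorem glap_neg (f : V → ℝ) (x : V) : glap m w (-f) x = -glap m w f x := by
  simp only [glap, Pi.neg_apply, ← mul_neg, ← Finset.sum_neg_distrib]
  congr 1
  exact Finset.sum_congr rfl fun y _ => by ring

theorem gGam_neg_left (f g : V → ℝ) (x : V) : gGam m w (-f) g x = -gGam m w f g x := by
  have h : (fun z => (-f) z * g z) = -fun z => f z * g z := by ext; simp
  rw [gGam, gGam, h, glap_neg, glap_neg]
  simp only [Pi.neg_apply]
  ring

theorem gGam_comm (f g : V → ℝ) (x : V) : gGam m w f g x = gGam m w g f x := by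
  simp only [gGam, mul_comm (f _) (g _)]
  ring

theorem eip_comm (f g : V → ℝ) : eip w f g = eip w g f := by
  simp only [eip, mul_comm (f _ - f _)]

variable {m w}

theorem sum_mul_glap (hm : ∀ x, m x ≠ 0) (hsymm : ∀ x y, w x y = w y x) (f g : V → ℝ) :
    ∑ x, m x * (f x * glap m w g x) = -eip w f g := by
  have hx : ∀ x, m x * (f x * glap m w g x) = ∑ y, f x * (g y - g x) * w x y := by
    intro x
    rw [glap, Finset.mul_sum, Finset.mul_sum, Finset.mul_sum]
    refine Finset.sum_congr rfl fun y _ => ?_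
    field_simp [hm x]
  have hswap : ∑ x, ∑ y, f x * (g y - g x) * w x y = ∑ x, ∑ y, f y * (g x - g y) * w x y := by
    rw [Finset.sum_comm]
    simp only [hsymm]
  have hsum : ∑ x, ∑ y, f x * (g y - g x) * w x y + ∑ x, ∑ y, f y * (g x - g y) * w x y
      = -(2 * eip w f g) := by
    rw [eip, ← mul_assoc, mul_one_div_cancel (two_ne_zero' ℝ), one_mul, ← Finset.sum_add_distrib,
      ← Finset.sum_neg_distrib]
    refine Finset.sum_congr rfl fun x _ => ?_
    rw [← Finset.sum_add_distrib, ← Finset.sum_neg_distrib]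
    exact Finset.sum_congr rfl fun y _ => by ring
  simp only [hx]
  linarith

theorem sum_mul_glap_comm (hm : ∀ x, m x ≠ 0) (hsymm : ∀ x y, w x y = w y x) (f g : V → ℝ) :
    ∑ x, m x * (f x * glap m w g x) = ∑ x, m x * (g x * glap m w f x) := by
  rw [sum_mul_glap hm hsymm, sum_mul_glap hm hsymm, eip_comm]

theorem sum_glap (hm : ∀ x, m x ≠ 0) (hsymm : ∀ x y, w x y = w y x) (f : V → ℝ) :
    ∑ x, m x * glap m w f x = 0 := by
  simpa [eip] using sum_mul_glap hm hsymm (fun _ => 1) f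

theorem sum_gGam (hm : ∀ x, m x ≠ 0) (hsymm : ∀ x y, w x y = w y x) (f g : V → ℝ) :
    ∑ x, m x * gGam m w f g x = eip w f g := by
  have hx : ∀ x, m x * gGam m w f g x = (1 / 2) * (m x * glap m w (fun z => f z * g z) x
      - m x * (g x * glap m w f x) - m x * (f x * glap m w g x)) := fun x => by
    rw [gGam]; ring
  simp only [hx, ← Finset.mul_sum, Finset.sum_sub_distrib, sum_glap hm hsymm,
    sum_mul_glap hm hsymm, eip_comm w g f]
  ring

theorem sum_gGam2_self (hm : ∀ x, m x ≠ 0) (hsymm : ∀ x y, w x y = w y x) (f : V → ℝ) :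
    ∑ x, m x * gGam2 m w f f x = ∑ x, m x * glap m w f x ^ 2 := by
  have hx : ∀ x, m x * gGam2 m w f f x = (1 / 2) * (m x * glap m w (gGam m w f f) x
      - m x * gGam m w (glap m w f) f x - m x * gGam m w f (glap m w f) x) := fun x => by
    rw [gGam2]; ring
  have hsq : ∑ x, m x * glap m w f x ^ 2 = ∑ x, m x * (glap m w f x * glap m w f x) :=
    Finset.sum_congr rfl fun x _ => by ring
  simp only [hx, ← Finset.mul_sum, Finset.sum_sub_distrib, sum_glap hm hsymm,
    sum_gGam hm hsymm, hsq, sum_mul_glap hm hsymm, eip_comm w f]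
  ring

theorem eq_of_eip_self_eq_zero (hsymm : ∀ x y, w x y = w y x)
    (hnn : ∀ x y, 0 ≤ w x y) (hconn : (wgraph w).Connected) {f : V → ℝ} (hf : eip w f f = 0)
    (a b : V) : f a = f b := by
  have hterm : ∀ x y, 0 ≤ (f y - f x) * (f y - f x) * w x y := fun x y =>
    mul_nonneg (mul_self_nonneg _) (hnn x y)
  have hzero : ∀ x y, (f y - f x) * (f y - f x) * w x y = 0 := by
    rw [eip, mul_eq_zero, or_iff_right (by norm_num),
      Finset.sum_eq_zero_iff_of_nonneg fun x _ => Finset.sum_nonneg fun y _ => hterm x y] at hf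
    exact fun x y => (Finset.sum_eq_zero_iff_of_nonneg fun y _ => hterm x y).1
      (hf x (Finset.mem_univ x)) y (Finset.mem_univ y)
  refine hconn.forall_of_adj_imp (P := fun z => f a = f z) (fun x y hxy hx => ?_) rfl b
  have := hzero x y
  rw [mul_eq_zero, or_iff_left (pos_of_wgraph_adj hsymm hxy).ne', mul_self_eq_zero,
    sub_eq_zero] at this
  rw [hx, this]

end Calculus

section CurvatureDefect

omit [DecidableEq V]

variable {m : V → ℝ} {w : V → V → ℝ}

variable (m w) in
noncomputable def cdDefect (c K : ℝ) (f : V → ℝ) (x : V) : ℝ :=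
  gGam2 m w f f x - (c * glap m w f x ^ 2 + K * gGam m w f f x)

variable (m w) in
noncomputable def cdForm (c K : ℝ) (f : V → ℝ) : ℝ :=
  ∑ x, m x * (glap m w f x * ((1 - c) * glap m w f x + K * f x))

open ENNReal in
theorem CDE.cdDefect_nonneg {K : ℝ} {n : ℝ≥0∞} (h : CDE m w K n) (f : V → ℝ) (x : V) :
    0 ≤ cdDefect m w (cdC n) K f x :=
  sub_nonneg.2 (h f x)

theorem sum_cdDefect (hm : ∀ x, m x ≠ 0) (hsymm : ∀ x y, w x y = w y x) (c K : ℝ)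
    (f : V → ℝ) : ∑ x, m x * cdDefect m w c K f x = cdForm m w c K f := by
  have hx : ∀ x, m x * cdDefect m w c K f x
      = m x * gGam2 m w f f x - c * (m x * glap m w f x ^ 2) - K * (m x * gGam m w f f x) :=
    fun x => by rw [cdDefect]; ring
  have hy : ∀ x, m x * (glap m w f x * ((1 - c) * glap m w f x + K * f x))
      = (1 - c) * (m x * glap m w f x ^ 2) + K * (m x * (f x * glap m w f x)) :=
    fun x => by ring
  simp only [cdForm, hx, hy, Finset.sum_sub_distrib, Finset.sum_add_distrib, ← Finset.mul_sum,
    sum_gGam2_self hm hsymm, sum_gGam hm hsymm, sum_mul_glap hm hsymm]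
  ring

theorem cdForm_add_smul (hm : ∀ x, m x ≠ 0) (hsymm : ∀ x y, w x y = w y x) (c K : ℝ)
    (u g : V → ℝ) (t : ℝ) :
    cdForm m w c K (fun z => u z + t * g z) = cdForm m w c K g * (t * t)
      + 2 * (∑ x, m x * (glap m w g x * ((1 - c) * glap m w u x + K * u x))) * t
      + cdForm m w c K u := by
  have hx : ∀ x, m x * (glap m w (fun z => u z + t * g z) x
        * ((1 - c) * glap m w (fun z => u z + t * g z) x + K * (u x + t * g x)))
      = m x * (glap m w u x * ((1 - c) * glap m w u x + K * u x))
        + t * (m x * (glap m w g x * ((1 - c) * glap m w u x + K * u x)))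
        + t * (m x * (glap m w u x * ((1 - c) * glap m w g x + K * g x)))
        + t * t * (m x * (glap m w g x * ((1 - c) * glap m w g x + K * g x))) := fun x => by
    rw [glap_add_smul]; ring
  have hcross : ∑ x, m x * (glap m w u x * ((1 - c) * glap m w g x + K * g x))
      = ∑ x, m x * (glap m w g x * ((1 - c) * glap m w u x + K * u x)) := by
    have hsplit : ∀ f h : V → ℝ, ∑ x, m x * (glap m w f x * ((1 - c) * glap m w h x + K * h x))
        = (1 - c) * ∑ x, m x * (glap m w f x * glap m w h x)
          + K * ∑ x, m x * (h x * glap m w f x) := fun f h => by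
      rw [Finset.mul_sum, Finset.mul_sum, ← Finset.sum_add_distrib]
      exact Finset.sum_congr rfl fun x _ => by ring
    rw [hsplit, hsplit, sum_mul_glap_comm hm hsymm g u]
    simp only [mul_comm (glap m w u _)]
  rw [cdForm, Finset.sum_congr rfl fun x _ => hx x]
  simp only [Finset.sum_add_distrib, ← Finset.mul_sum]
  rw [hcross, cdForm, cdForm]
  ring

/-- `u` is a zero of the nonnegative quadratic form `cdForm`, so it lies in the kernel of its
polarization. -/
theorem cdForm_polar_eq_zero (hm : ∀ x, m x ≠ 0) (hsymm : ∀ x y, w x y = w y x) {c K : ℝ}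
    (hpos : ∀ f, 0 ≤ cdForm m w c K f) {u : V → ℝ} (hu : cdForm m w c K u = 0) (g : V → ℝ) :
    ∑ x, m x * (glap m w g x * ((1 - c) * glap m w u x + K * u x)) = 0 := by
  have hdisc := discrim_le_zero fun t =>
    (cdForm_add_smul hm hsymm c K u g t) ▸ hpos fun z => u z + t * g z
  rw [hu, discrim, mul_zero, sub_zero] at hdisc
  nlinarith [sq_nonneg (∑ x, m x * (glap m w g x * ((1 - c) * glap m w u x + K * u x)))]

theorem cdDefect_eq_zero_of_cdForm_eq_zero (hm : ∀ x, 0 < m x) (hsymm : ∀ x y, w x y = w y x)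
    {c K : ℝ} (hCD : ∀ f x, 0 ≤ cdDefect m w c K f x) {u : V → ℝ}
    (hu : cdForm m w c K u = 0) (x : V) : cdDefect m w c K u x = 0 := by
  rw [← sum_cdDefect (fun x => (hm x).ne') hsymm] at hu
  have := (Finset.sum_eq_zero_iff_of_nonneg fun y _ => mul_nonneg (hm y).le (hCD u y)).1 hu x
    (Finset.mem_univ x)
  exact (mul_eq_zero.1 this).resolve_left (hm x).ne'

theorem four_mul_cdDefect_of_glap_eq_neg {c : ℝ} {u : V → ℝ} (hΔ : glap m w u = -u) (x : V) :
    4 * cdDefect m w c (1 - c) u x = glap m w (glap m w fun z => u z * u z) x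
      + 2 * (1 + c) * glap m w (fun z => u z * u z) x := by
  have hΓ : gGam m w u u = fun z => u z * u z + (1 / 2) * glap m w (fun z => u z * u z) z := by
    funext z
    simp only [gGam, hΔ, Pi.neg_apply]
    ring
  have hΓ₂ : gGam2 m w u u x = (1 / 2) * glap m w (gGam m w u u) x + gGam m w u u x := by
    rw [gGam2, hΔ, gGam_neg_left, gGam_comm m w u (-u), gGam_neg_left]
    ring
  rw [cdDefect, hΓ₂, hΓ, glap_add_smul, hΔ]
  simp only [Pi.neg_apply]
  ring

end CurvatureDefect

section Steklov

omit [DecidableEq V]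

variable {m : V → ℝ} {w : V → V → ℝ} {B : Finset V} {u : V → ℝ} {c K σ : ℝ}

theorem cdForm_eq_zero_of_steklov (hKσ : K = σ * (1 - c))
    (hharm : ∀ x, x ∉ B → glap m w u x = 0) (hstek : ∀ x ∈ B, -glap m w u x = σ * u x) :
    cdForm m w c K u = 0 := by
  refine Finset.sum_eq_zero fun x _ => ?_
  by_cases hx : x ∈ B
  · rw [show glap m w u x = -(σ * u x) by linarith [hstek x hx], hKσ]
    ring
  · rw [hharm x hx]
    ring

theorem steklov_eq_zero_of_notMem (hm : ∀ x, 0 < m x) (hsymm : ∀ x y, w x y = w y x)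
    (hnn : ∀ x y, 0 ≤ w x y) (hconn : (wgraph w).Connected)
    (hCD : ∀ f x, 0 ≤ cdDefect m w c K f x) (hKσ : K = σ * (1 - c)) (hK : K ≠ 0)
    (hharm : ∀ x, x ∉ B → glap m w u x = 0) (hstek : ∀ x ∈ B, -glap m w u x = σ * u x)
    {s : V} (hs : s ∈ B) {x : V} (hx : x ∉ B) : u x = 0 := by
  have hm' : ∀ x, m x ≠ 0 := fun x => (hm x).ne'
  set h : V → ℝ := fun z => (1 - c) * glap m w u z + K * u z
  have hpos : ∀ f, 0 ≤ cdForm m w c K f := fun f => by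
    rw [← sum_cdDefect hm' hsymm]
    exact Finset.sum_nonneg fun y _ => mul_nonneg (hm y).le (hCD f y)
  have horth := cdForm_polar_eq_zero hm' hsymm hpos
    (cdForm_eq_zero_of_steklov hKσ hharm hstek) h
  have heip : eip w h h = 0 := by
    rw [← neg_eq_zero, ← sum_mul_glap hm' hsymm, ← horth]
    exact Finset.sum_congr rfl fun y _ => by ring
  have hhs : h s = 0 := by
    simp only [h, show glap m w u s = -(σ * u s) by linarith [hstek s hs], hKσ]
    ring
  have hhx : h x = K * u x := by simp only [h, hharm x hx]; ring
  have := eq_of_eip_self_eq_zero hsymm hnn hconn heip x s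
  rw [hhs, hhx] at this
  exact (mul_eq_zero.1 this).resolve_left hK

end Steklov

section Markov

omit [DecidableEq V]

variable {m : V → ℝ} {w : V → V → ℝ}

variable (m w) in
noncomputable def markov (f : V → ℝ) (x : V) : ℝ := (1 / m x) * ∑ y, w x y * f y

theorem glap_eq_markov_sub (hnorm : ∀ x, (1 / m x) * ∑ y, w x y = 1) (f : V → ℝ) (x : V) :
    glap m w f x = markov m w f x - f x := by
  have hsplit : ∑ y, (f y - f x) * w x y = ∑ y, w x y * f y - f x * ∑ y, w x y := by
    rw [Finset.mul_sum, ← Finset.sum_sub_distrib]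
    exact Finset.sum_congr rfl fun y _ => by ring
  rw [glap, markov, hsplit, mul_sub, mul_left_comm, hnorm x, mul_one]

theorem glap_glap_eq_markov (hnorm : ∀ x, (1 / m x) * ∑ y, w x y = 1) (f : V → ℝ) (x : V) :
    glap m w (glap m w f) x = markov m w (markov m w f) x - 2 * markov m w f x + f x := by
  have hsub : markov m w (glap m w f) x = markov m w (markov m w f) x - markov m w f x := by
    simp only [markov, glap_eq_markov_sub hnorm, mul_sub, Finset.sum_sub_distrib]
  rw [glap_eq_markov_sub hnorm, hsub, glap_eq_markov_sub hnorm]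
  ring

theorem markov_nonneg (hm : ∀ x, 0 < m x) (hnn : ∀ x y, 0 ≤ w x y) {f : V → ℝ}
    (hf : ∀ z, 0 ≤ f z) (x : V) : 0 ≤ markov m w f x :=
  mul_nonneg (one_div_nonneg.2 (hm x).le) (Finset.sum_nonneg fun y _ => mul_nonneg (hnn x y) (hf y))

theorem markov_pos (hm : ∀ x, 0 < m x) (hnn : ∀ x y, 0 ≤ w x y) {f : V → ℝ}
    (hf : ∀ z, 0 ≤ f z) {x y : V} (hxy : 0 < w x y) (hy : 0 < f y) : 0 < markov m w f x :=
  mul_pos (one_div_pos.2 (hm x)) (Finset.sum_pos' (fun z _ => mul_nonneg (hnn x z) (hf z))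
    ⟨y, Finset.mem_univ y, mul_pos hxy hy⟩)

theorem glap_eq_neg_of_eq_zero_of_notMem {B : Finset V} {u : V → ℝ}
    (hnorm : ∀ x, (1 / m x) * ∑ y, w x y = 1) (hBind : ∀ x ∈ B, ∀ y ∈ B, w x y = 0)
    (hharm : ∀ x, x ∉ B → glap m w u x = 0) (hu : ∀ x, x ∉ B → u x = 0) : glap m w u = -u := by
  funext x
  by_cases hx : x ∈ B
  · have hPu : markov m w u x = 0 := by
      refine mul_eq_zero_of_right _ (Finset.sum_eq_zero fun y _ => ?_)
      by_cases hy : y ∈ B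
      · rw [hBind x hx y hy, zero_mul]
      · rw [hu y hy, mul_zero]
    rw [glap_eq_markov_sub hnorm, hPu, zero_sub, Pi.neg_apply]
  · rw [hharm x hx, Pi.neg_apply, hu x hx, neg_zero]

theorem markov_markov_add_eq_of_cdDefect_eq_zero (hnorm : ∀ x, (1 / m x) * ∑ y, w x y = 1)
    {c : ℝ} {u : V → ℝ} (hΔ : glap m w u = -u) (hdef : ∀ x, cdDefect m w c (1 - c) u x = 0)
    (x : V) : markov m w (markov m w fun z => u z * u z) x + 2 * c * markov m w (fun z => u z * u z) x
      = (1 + 2 * c) * (u x * u x) := by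
  have h4 := four_mul_cdDefect_of_glap_eq_neg (c := c) hΔ x
  rw [hdef x, glap_glap_eq_markov hnorm, glap_eq_markov_sub hnorm] at h4
  linarith

theorem eq_zero_of_markov_markov_add_eq (hm : ∀ x, 0 < m x) (hnn : ∀ x y, 0 ≤ w x y) {c : ℝ}
    (hc : 0 ≤ c) {v : V → ℝ} (hv0 : ∀ z, 0 ≤ v z)
    (hv : ∀ x, markov m w (markov m w v) x + 2 * c * markov m w v x = (1 + 2 * c) * v x)
    {s y : V} (hys : 0 < w y s) (hs : 0 < v s) (hy : v y = 0) : c = 0 := by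
  have hPv := markov_pos hm hnn hv0 hys hs
  have := hv y
  rw [hy, mul_zero] at this
  nlinarith [markov_nonneg hm hnn (markov_nonneg hm hnn hv0) y]

theorem weight_eq_zero_of_markov_markov_eq_self {B : Finset V}
    (hm : ∀ x, 0 < m x) (hsymm : ∀ x y, w x y = w y x) (hnn : ∀ x y, 0 ≤ w x y)
    (hconn : (wgraph w).Connected) {v : V → ℝ} (hv0 : ∀ z, 0 ≤ v z)
    (hv : ∀ z, markov m w (markov m w v) z = v z) (hvB : ∀ z, z ∉ B → v z = 0) {s : V}
    (hs : 0 < v s) : ∀ x, x ∉ B → ∀ y, y ∉ B → w x y = 0 := by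
  have htwo : ∀ {a b t}, 0 < w b a → 0 < w a t → 0 < v t → 0 < v b := fun hba hat ht =>
    hv _ ▸ markov_pos hm hnn (markov_nonneg hm hnn hv0) hba (markov_pos hm hnn hv0 hat ht)
  have hall : ∀ z, 0 < v z ∨ ∃ t, 0 < v t ∧ 0 < w z t := by
    refine hconn.forall_of_adj_imp (fun a b hab ha => ?_) (Or.inl hs)
    have hba : 0 < w b a := hsymm a b ▸ pos_of_wgraph_adj hsymm hab
    rcases ha with ha | ⟨t, ht, hat⟩
    · exact Or.inr ⟨a, ha, hba⟩
    · exact Or.inl (htwo hba hat ht)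
  intro x hx y hy
  by_contra hxy
  have hyx : 0 < w y x := hsymm x y ▸ lt_of_le_of_ne (hnn x y) (Ne.symm hxy)
  rcases hall x with h | ⟨t, ht, hxt⟩
  · exact h.ne' (hvB x hx)
  · exact (htwo hyx hxt ht).ne' (hvB y hy)

end Markov

open ENNReal in
theorem lich_mul_one_sub_cdC {n : ℝ≥0∞} (hn : 1 < n) (K : ℝ) : lich n K * (1 - cdC n) = K := by
  by_cases htop : n = ⊤
  · simp [lich, cdC, htop]
  · have h1 : 1 < n.toReal := by simpa using (ENNReal.toReal_lt_toReal one_ne_top htop).2 hn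
    rw [lich, if_neg htop, cdC, ENNReal.toReal_inv]
    field_simp [(by linarith : n.toReal - 1 ≠ 0)]

open ENNReal in
theorem eq_top_of_cdC_eq_zero {n : ℝ≥0∞} (hn : n ≠ 0) (h : cdC n = 0) : n = ⊤ := by
  rw [cdC, ENNReal.toReal_eq_zero_iff, ENNReal.inv_eq_zero, ENNReal.inv_eq_top] at h
  exact h.resolve_right hn

open ENNReal in
theorem stmt18_general (m : V → ℝ) (w : V → V → ℝ) (B : Finset V) (hW : WeightedGraph m w)
    (hconn : (wgraph w).Connected) (hB : GraphBoundary w B)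
    (hnorm : ∀ x, (1 / m x) * ∑ y, w x y = 1)
    (K : ℝ) (n : ℝ≥0∞) (hK : 0 < K) (hn : 1 < n)
    (hCD : CDE m w K n)
    (hs1 : SteklovEig m w B (lich n K)) :
    n = ⊤ ∧ K = 1 ∧
    (∀ x, x ∉ B → ∀ y, y ∉ B → w x y = 0) ∧
    (∀ x, x ∉ B → (1 / m x) * ∑ y ∈ B, w x y = 1) := by
  obtain ⟨hm, hsymm, hnn, -⟩ := hW
  obtain ⟨-, hBind, hBadj⟩ := hB
  obtain ⟨u, ⟨s, hsB, hus⟩, hharm, hstek⟩ := hs1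
  have hKσ : K = lich n K * (1 - cdC n) := (lich_mul_one_sub_cdC hn K).symm
  have hint : ∀ x, x ∉ B → u x = 0 := fun x hx => steklov_eq_zero_of_notMem hm hsymm hnn hconn
    hCD.cdDefect_nonneg hKσ hK.ne' hharm hstek hsB hx
  have hΔ : glap m w u = -u := glap_eq_neg_of_eq_zero_of_notMem hnorm hBind hharm hint
  have hσ : lich n K = 1 := by
    have := hstek s hsB
    rw [hΔ, Pi.neg_apply, neg_neg] at this
    exact mul_right_cancel₀ hus (this.symm.trans (one_mul _).symm)
  have hKc : K = 1 - cdC n := by rw [hKσ, hσ, one_mul]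
  have hv := markov_markov_add_eq_of_cdDefect_eq_zero hnorm hΔ fun x => hKc ▸
    cdDefect_eq_zero_of_cdForm_eq_zero hm hsymm hCD.cdDefect_nonneg
      (cdForm_eq_zero_of_steklov hKσ hharm hstek) x
  have hv0 : ∀ z, 0 ≤ u z * u z := fun z => mul_self_nonneg (u z)
  have hvB : ∀ z, z ∉ B → u z * u z = 0 := fun z hz => by rw [hint z hz, mul_zero]
  have hvs : 0 < u s * u s := mul_self_pos.2 hus
  obtain ⟨y, hyB, hsy⟩ := hBadj s hsB
  have hc := eq_zero_of_markov_markov_add_eq (c := cdC n) hm hnn ENNReal.toReal_nonneg hv0 hv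
    (hsymm s y ▸ hsy) hvs (hvB y hyB)
  have hedge := weight_eq_zero_of_markov_markov_eq_self hm hsymm hnn hconn hv0
    (fun x => by simpa [hc] using hv x) hvB hvs
  refine ⟨eq_top_of_cdC_eq_zero (ne_bot_of_gt hn) hc, by rw [hKc, hc, sub_zero], hedge,
    fun x hx => ?_⟩
  rw [Finset.sum_subset (Finset.subset_univ B) fun y _ hy => hedge x hx y hy]
  exact hnorm x

open ENNReal in
/-- rigidity for normalized weight: if `Deg(x) = 1` for all `x`,
`CD(K,n)` holds with `K > 0`, `n > 1` (possibly `n = ∞`) and `σ₂ = nK/(n-1)`,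
then `n = ∞`, `K = 1`, the interior induces no edges, and `Deg_b(x) = 1` for
every interior vertex. -/
theorem stmt18 (m : V → ℝ) (w : V → V → ℝ) (B : Finset V) (hW : WeightedGraph m w)
    (hconn : (wgraph w).Connected) (hB : GraphBoundary w B)
    (hnorm : ∀ x, (1 / m x) * ∑ y, w x y = 1)
    (K : ℝ) (n : ℝ≥0∞) (hK : 0 < K) (hn : 1 < n)
    (hCD : CDE m w K n)
    (hs1 : SteklovEig m w B (lich n K))
    (hs2 : ∀ σ : ℝ, SteklovEig m w B σ → 0 < σ → lich n K ≤ σ) :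
    n = ⊤ ∧ K = 1 ∧
    (∀ x, x ∉ B → ∀ y, y ∉ B → w x y = 0) ∧
    (∀ x, x ∉ B → (1 / m x) * ∑ y ∈ B, w x y = 1) :=
  stmt18_general m w B hW hconn hB hnorm K n hK hn hCD hs1
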